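/- Let Q be a connected quiver with exactly three vertices which has a double edge. Then Q is of finite mutation type if and only if Q is an oriented 3-cycle whose multiset of edge weights is {2,1,1} or {2,2,2}; that is, up to relabeling of the three vertices, B_{12}, B_{23}, B_{31} are all positive and equal to 2,1,1 or to 2,2,2 in some order. -/

import Mathlib

open scoped Classical

/-- A quiver is encoded by its skew-symmetric exchange matrix. -/
def IsSkewQ {n : ℕ} (B : Matrix (Fin n) (Fin n) ℤ) : Prop :=
  ∀ i j, B j i = - B i j

/-- Fomin-Zelevinsky mutation of a skew-symmetric matrix at vertex `k`. -/
def mutate {n : ℕ} (B : Matrix (Fin n) (Fin n) ℤ) (k : Fin n) : Matrix (Fin n) (Fin n) ℤ :=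
  Matrix.of fun i j =>
    if i = k ∨ j = k then - B i j
    else B i j + Int.sign (B i k) * max (B i k * B k j) 0

def mutateList {n : ℕ} (B : Matrix (Fin n) (Fin n) ℤ) (l : List (Fin n)) :
    Matrix (Fin n) (Fin n) ℤ :=
  l.foldl mutate B

/-- `C` is obtained from `B` by a finite sequence of mutations followed by a
simultaneous relabeling of the index set. -/
def MutEquiv {n m : ℕ} (B : Matrix (Fin n) (Fin n) ℤ) (C : Matrix (Fin m) (Fin m) ℤ) : Prop :=
  ∃ (l : List (Fin n)) (σ : Fin m ≃ Fin n), C = (mutateList B l).submatrix ⇑σ ⇑σ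

/-- Finite mutation type: the mutation class is finite. -/
def FiniteMutationType {n : ℕ} (B : Matrix (Fin n) (Fin n) ℤ) : Prop :=
  {C : Matrix (Fin n) (Fin n) ℤ | MutEquiv B C}.Finite

/-- The underlying undirected graph of the quiver. -/
def quiverGraph {n : ℕ} (B : Matrix (Fin n) (Fin n) ℤ) : SimpleGraph (Fin n) where
  Adj i j := i ≠ j ∧ (B i j ≠ 0 ∨ B j i ≠ 0)
  symm := ⟨fun i j h => ⟨h.1.symm, h.2.symm⟩⟩
  loopless := ⟨fun i h => h.1 rfl⟩

def ConnectedQ {n : ℕ} (B : Matrix (Fin n) (Fin n) ℤ) : Prop :=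
  (quiverGraph B).Connected

def SimplyLaced {n : ℕ} (B : Matrix (Fin n) (Fin n) ℤ) : Prop :=
  ∀ i j, |B i j| ≤ 1

/-- The quiver (matrix) is a cycle: the vertices can be labeled by `ZMod m` so that
adjacency is exactly between consecutive labels. -/
def IsCycleMat {m : ℕ} (C : Matrix (Fin m) (Fin m) ℤ) : Prop :=
  3 ≤ m ∧ ∃ ρ : ZMod m ≃ Fin m, ∀ i j : ZMod m,
    C (ρ i) (ρ j) ≠ 0 ↔ (j = i + 1 ∨ i = j + 1)

/-- The quiver is an oriented cycle. -/
def IsOrientedCycleMat {m : ℕ} (C : Matrix (Fin m) (Fin m) ℤ) : Prop :=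
  3 ≤ m ∧ ∃ ρ : ZMod m ≃ Fin m,
    (∀ i j : ZMod m, C (ρ i) (ρ j) ≠ 0 ↔ (j = i + 1 ∨ i = j + 1)) ∧
    (∀ i : ZMod m, 0 < C (ρ i) (ρ (i + 1)))

def IsNonOrientedCycleMat {m : ℕ} (C : Matrix (Fin m) (Fin m) ℤ) : Prop :=
  IsCycleMat C ∧ ¬ IsOrientedCycleMat C

/-- A double edge: two vertices joined by an edge of weight 2. -/
def IsDoubleEdgeMat {m : ℕ} (C : Matrix (Fin m) (Fin m) ℤ) : Prop :=
  m = 2 ∧ ∃ i j : Fin m, i ≠ j ∧ (C i j = 2 ∨ C i j = -2)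

/-- The Dynkin tree D4: a center joined by single edges (arbitrarily oriented) to
three pairwise non-adjacent vertices. -/
def IsD4Mat {m : ℕ} (C : Matrix (Fin m) (Fin m) ℤ) : Prop :=
  m = 4 ∧ ∃ c : Fin m,
    (∀ i, i ≠ c → (C c i = 1 ∨ C c i = -1)) ∧
    (∀ i j, i ≠ c → j ≠ c → i ≠ j → C i j = 0)

/-- Two adjacent oriented simply-laced triangles sharing the edge `{c,d}`,
with `a`, `b` non-adjacent. -/
def IsTwoTrianglesMat {m : ℕ} (C : Matrix (Fin m) (Fin m) ℤ) : Prop :=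
  m = 4 ∧ ∃ a b c d : Fin m,
    a ≠ b ∧ a ≠ c ∧ a ≠ d ∧ b ≠ c ∧ b ≠ d ∧ c ≠ d ∧
    C a b = 0 ∧ C b a = 0 ∧
    C a c = 1 ∧ C c d = 1 ∧ C d a = 1 ∧ C b c = 1 ∧ C d b = 1

/-- Basic quivers: D4, two adjacent oriented triangles, or a simply-laced
oriented cycle with at least 4 vertices. -/
def IsBasicMat {m : ℕ} (C : Matrix (Fin m) (Fin m) ℤ) : Prop :=
  IsD4Mat C ∨ IsTwoTrianglesMat C ∨
    (4 ≤ m ∧ (∀ i j, |C i j| ≤ 1) ∧ IsOrientedCycleMat C)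

def HasBasicSubquiver {n : ℕ} (B : Matrix (Fin n) (Fin n) ℤ) : Prop :=
  ∃ (m : ℕ) (f : Fin m ↪ Fin n), IsBasicMat (B.submatrix ⇑f ⇑f)

/-- Build a skew-symmetric matrix from a list of weighted arrows. -/
def ofEdges (n : ℕ) (E : List (Fin n × Fin n × ℤ)) : Matrix (Fin n) (Fin n) ℤ :=
  Matrix.of fun i j =>
    E.foldl (fun acc e =>
      acc + (if e.1 = i ∧ e.2.1 = j then e.2.2 else 0)
          + (if e.1 = j ∧ e.2.1 = i then - e.2.2 else 0)) 0

def E6mat : Matrix (Fin 6) (Fin 6) ℤ :=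
  ofEdges 6 [(0,1,1),(1,2,1),(2,3,1),(3,4,1),(2,5,1)]

def E7mat : Matrix (Fin 7) (Fin 7) ℤ :=
  ofEdges 7 [(0,1,1),(1,2,1),(2,3,1),(3,4,1),(4,5,1),(2,6,1)]

def E8mat : Matrix (Fin 8) (Fin 8) ℤ :=
  ofEdges 8 [(0,1,1),(1,2,1),(2,3,1),(3,4,1),(4,5,1),(5,6,1),(2,7,1)]

def E6affMat : Matrix (Fin 7) (Fin 7) ℤ :=
  ofEdges 7 [(0,1,1),(1,2,1),(2,3,1),(3,4,1),(2,5,1),(5,6,1)]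

def E7affMat : Matrix (Fin 8) (Fin 8) ℤ :=
  ofEdges 8 [(0,1,1),(1,2,1),(2,3,1),(3,4,1),(4,5,1),(5,6,1),(3,7,1)]

def E8affMat : Matrix (Fin 9) (Fin 9) ℤ :=
  ofEdges 9 [(0,1,1),(1,2,1),(2,3,1),(3,4,1),(4,5,1),(5,6,1),(6,7,1),(2,8,1)]

/-- E6^(1,1): core b₁=0, b₂=1 (weight-2 arrow b₁→b₂), a₁=2, a₂=3, a₃=4 in oriented
triangles, with one extra path vertex attached at each aᵢ. -/
def E611Mat : Matrix (Fin 8) (Fin 8) ℤ :=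
  ofEdges 8 [(0,1,2),(2,0,1),(1,2,1),(3,0,1),(1,3,1),(4,0,1),(1,4,1),(2,5,1),(3,6,1),(4,7,1)]

def E711Mat : Matrix (Fin 9) (Fin 9) ℤ :=
  ofEdges 9 [(0,1,2),(2,0,1),(1,2,1),(3,0,1),(1,3,1),(4,0,1),(1,4,1),
             (2,5,1),(5,6,1),(4,7,1),(7,8,1)]

def E811Mat : Matrix (Fin 10) (Fin 10) ℤ :=
  ofEdges 10 [(0,1,2),(2,0,1),(1,2,1),(3,0,1),(1,3,1),(4,0,1),(1,4,1),
              (2,5,1),(4,6,1),(6,7,1),(7,8,1),(8,9,1)]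

/-- X6: c=0, a₁=1, a₂=2, b₁=3, b₂=4, d=5. -/
def X6mat : Matrix (Fin 6) (Fin 6) ℤ :=
  ofEdges 6 [(0,1,1),(2,0,1),(0,3,1),(4,0,1),(1,2,2),(3,4,2),(0,5,1)]

/-- X7: c=0, aᵢ=1,3,5, a′ᵢ=2,4,6. -/
def X7mat : Matrix (Fin 7) (Fin 7) ℤ :=
  ofEdges 7 [(0,1,1),(1,2,2),(2,0,1),(0,3,1),(3,4,2),(4,0,1),(0,5,1),(5,6,2),(6,0,1)]

/-- The kernel of B mod 2. -/
def Vbar0 {n : ℕ} (B : Matrix (Fin n) (Fin n) ℤ) : Submodule (ZMod 2) (Fin n → ZMod 2) :=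
  LinearMap.ker (Matrix.mulVecLin (B.map (fun x : ℤ => (x : ZMod 2))))

/-- A basic radical vector: a mod-2 radical vector whose support has exactly two
vertices or is a cycle. -/
def IsBasicRadical {n : ℕ} (B : Matrix (Fin n) (Fin n) ℤ) (u : Fin n → ZMod 2) : Prop :=
  u ∈ Vbar0 B ∧
    ({i | u i ≠ 0}.ncard = 2 ∨
      ∃ (m : ℕ) (f : Fin m ↪ Fin n),
        Set.range ⇑f = {i | u i ≠ 0} ∧ IsCycleMat (B.submatrix ⇑f ⇑f))

/-- The span of the basic radical vectors. -/
def Vbar00 {n : ℕ} (B : Matrix (Fin n) (Fin n) ℤ) : Submodule (ZMod 2) (Fin n → ZMod 2) :=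
  Submodule.span (ZMod 2) {u | IsBasicRadical B u}

/-!
Up to relabeling, a quiver on three vertices is either an oriented cycle with positive
weights `(a, b, c)` or acyclic. Mutating a cycle at a vertex turns it into the cycle
`(a * b - c, b, a)`; once some rotation satisfies `c + a < a * b`, this step can be repeated
forever with strictly increasing first weight, so the class is infinite. The positive cycles
without such a rotation are the rotations of `(1, 1, 1)`, `(2, 1, 1)` and `(2, 2, 2)`.
After at most one mutation at a leaf, a connected acyclic triangle has a path `0 → 1 → 2`,
and the mutation at `1` then produces a positive cycle, whose weights force all weights of
the triangle to be at most `1`. Conversely, the cycles `(2, 1, 1)` and `(2, 2, 2)` lie in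
explicit finite sets of quivers closed under mutation.
-/

lemma IsSkewQ.submatrix {n m : ℕ} {B : Matrix (Fin n) (Fin n) ℤ} (hB : IsSkewQ B)
    (f : Fin m → Fin n) : IsSkewQ (B.submatrix f f) :=
  fun i j => hB (f i) (f j)

lemma mutateList_cons {n : ℕ} (B : Matrix (Fin n) (Fin n) ℤ) (k : Fin n) (l : List (Fin n)) :
    mutateList B (k :: l) = mutateList (mutate B k) l := rfl

lemma mutateList_append {n : ℕ} (B : Matrix (Fin n) (Fin n) ℤ) (l₁ l₂ : List (Fin n)) :
    mutateList B (l₁ ++ l₂) = mutateList (mutateList B l₁) l₂ :=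
  List.foldl_append

lemma mutate_submatrix {n m : ℕ} (B : Matrix (Fin n) (Fin n) ℤ) (σ : Fin m ≃ Fin n) (k : Fin m) :
    mutate (B.submatrix σ σ) k = (mutate B (σ k)).submatrix σ σ := by
  ext i j
  simp only [mutate, Matrix.submatrix_apply, Matrix.of_apply, σ.apply_eq_iff_eq]

lemma mutateList_submatrix {n m : ℕ} (B : Matrix (Fin n) (Fin n) ℤ) (σ : Fin m ≃ Fin n)
    (l : List (Fin m)) :
    mutateList (B.submatrix σ σ) l = (mutateList B (l.map σ)).submatrix σ σ := by
  induction l generalizing B with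
  | nil => rfl
  | cons k l ih => rw [List.map_cons, mutateList_cons, mutateList_cons, mutate_submatrix, ih]

namespace MutEquiv

variable {n m p : ℕ}

lemma refl (B : Matrix (Fin n) (Fin n) ℤ) : MutEquiv B B :=
  ⟨[], Equiv.refl _, rfl⟩

lemma trans {B : Matrix (Fin n) (Fin n) ℤ} {C : Matrix (Fin m) (Fin m) ℤ} {D : Matrix (Fin p) (Fin p) ℤ}
    (h₁ : MutEquiv B C) (h₂ : MutEquiv C D) : MutEquiv B D := by
  obtain ⟨l₁, σ₁, rfl⟩ := h₁
  obtain ⟨l₂, σ₂, rfl⟩ := h₂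
  refine ⟨l₁ ++ l₂.map σ₁, σ₂.trans σ₁, ?_⟩
  rw [mutateList_submatrix, Matrix.submatrix_submatrix, mutateList_append, Equiv.coe_trans]

lemma mutate (B : Matrix (Fin n) (Fin n) ℤ) (k : Fin n) : MutEquiv B (_root_.mutate B k) :=
  ⟨[k], Equiv.refl _, rfl⟩

lemma submatrix (B : Matrix (Fin n) (Fin n) ℤ) (σ : Fin m ≃ Fin n) :
    MutEquiv B (B.submatrix σ σ) :=
  ⟨[], σ, rfl⟩

lemma of_submatrix (B : Matrix (Fin n) (Fin n) ℤ) (σ : Fin m ≃ Fin n) :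
    MutEquiv (B.submatrix σ σ) B := by
  simpa [Matrix.submatrix_submatrix] using submatrix (B.submatrix σ σ) σ.symm

end MutEquiv

lemma FiniteMutationType.of_mutEquiv {n : ℕ} {B C : Matrix (Fin n) (Fin n) ℤ}
    (h : MutEquiv B C) (hB : FiniteMutationType B) : FiniteMutationType C :=
  hB.subset fun _ hD => h.trans hD

lemma FiniteMutationType.of_mutate_closed {n : ℕ} {B : Matrix (Fin n) (Fin n) ℤ}
    (L : Finset (Matrix (Fin n) (Fin n) ℤ)) (hB : B ∈ L)
    (hL : ∀ X ∈ L, ∀ k, mutate X k ∈ L) : FiniteMutationType B := by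
  have hmem : ∀ l X, X ∈ L → mutateList X l ∈ L := by
    intro l
    induction l with
    | nil => exact fun _ hX => hX
    | cons k l ih => exact fun X hX => ih _ (hL X hX k)
  refine ((L ×ˢ (Finset.univ : Finset (Fin n ≃ Fin n))).image
    fun x => x.1.submatrix x.2 x.2).finite_toSet.subset ?_
  rintro _ ⟨l, σ, rfl⟩
  exact Finset.mem_image.mpr ⟨(mutateList B l, σ), by simp [hmem l B hB], rfl⟩

/-- `triangle a b c` has `B 0 1 = a`, `B 1 2 = b`, `B 2 0 = c`; it is an oriented cycle
exactly when `a`, `b`, `c` are all positive or all negative. -/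
def triangle (a b c : ℤ) : Matrix (Fin 3) (Fin 3) ℤ :=
  !![0, a, -c; -a, 0, b; c, -b, 0]

lemma IsSkewQ.eq_triangle {B : Matrix (Fin 3) (Fin 3) ℤ} (hB : IsSkewQ B) :
    B = triangle (B 0 1) (B 1 2) (B 2 0) := by
  have h₀ := hB 0 0; have h₁ := hB 1 1; have h₂ := hB 2 2
  have h₀₁ := hB 0 1; have h₀₂ := hB 0 2; have h₁₂ := hB 1 2
  ext i j
  fin_cases i <;> fin_cases j <;> simp [triangle] <;> omega

lemma IsSkewQ.submatrix_eq_triangle {B : Matrix (Fin 3) (Fin 3) ℤ} (hB : IsSkewQ B)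
    (f : Fin 3 → Fin 3) :
    B.submatrix f f = triangle (B (f 0) (f 1)) (B (f 1) (f 2)) (B (f 2) (f 0)) :=
  (hB.submatrix f).eq_triangle

lemma sign_mul_max_mul_of_nonneg {x y : ℤ} (hx : 0 ≤ x) (hy : 0 ≤ y) :
    x.sign * max (x * y) 0 = x * y := by
  rcases hx.eq_or_lt with rfl | hx
  · simp
  · rw [Int.sign_eq_one_of_pos hx, one_mul, max_eq_left (mul_nonneg hx.le hy)]

lemma mutate_triangle_one {a b : ℤ} (c : ℤ) (ha : 0 ≤ a) (hb : 0 ≤ b) :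
    mutate (triangle a b c) 1 = triangle (-a) (-b) (c - a * b) := by
  ext i j
  fin_cases i <;> fin_cases j <;>
    simp [mutate, triangle, sign_mul_max_mul_of_nonneg ha hb, sign_mul_max_mul_of_nonneg hb ha] <;>
    first | (right; positivity) | ring

lemma mutEquiv_triangle_rotate (a b c : ℤ) : MutEquiv (triangle a b c) (triangle b c a) := by
  convert MutEquiv.submatrix (triangle a b c) (finRotate 3) using 1
  ext i j
  fin_cases i <;> fin_cases j <;> rfl

lemma mutEquiv_triangle_reverse (a b c : ℤ) :
    MutEquiv (triangle a b c) (triangle (-b) (-a) (-c)) := by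
  convert MutEquiv.submatrix (triangle a b c) Fin.revPerm using 1
  ext i j
  fin_cases i <;> fin_cases j <;> simp [triangle]

lemma mutEquiv_triangle_flip {a b : ℤ} (c : ℤ) (ha : 0 ≤ a) (hb : 0 ≤ b) :
    MutEquiv (triangle a b c) (triangle b a (a * b - c)) := by
  have h := MutEquiv.mutate (triangle a b c) 1
  rw [mutate_triangle_one c ha hb] at h
  simpa using h.trans (mutEquiv_triangle_reverse _ _ _)

lemma mutEquiv_triangle_step {a b : ℤ} (c : ℤ) (ha : 0 ≤ a) (hb : 0 ≤ b) :
    MutEquiv (triangle a b c) (triangle (a * b - c) b a) :=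
  ((mutEquiv_triangle_flip c ha hb).trans (mutEquiv_triangle_rotate _ _ _)).trans
    (mutEquiv_triangle_rotate _ _ _)

def IsGrowing (a b c : ℤ) : Prop :=
  1 ≤ a ∧ 2 ≤ b ∧ 1 ≤ c ∧ c + a < a * b

lemma IsGrowing.lt_mul_sub {a b c : ℤ} (h : IsGrowing a b c) : a < a * b - c := by
  linarith [h.2.2.2]

lemma IsGrowing.next {a b c : ℤ} (h : IsGrowing a b c) : IsGrowing (a * b - c) b a := by
  obtain ⟨ha, hb, hc, hlt⟩ := h
  refine ⟨by linarith, hb, ha, ?_⟩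
  nlinarith

def growStep (t : ℤ × ℤ × ℤ) : ℤ × ℤ × ℤ :=
  (t.1 * t.2.1 - t.2.2, t.2.1, t.1)

lemma not_finiteMutationType_of_isGrowing {a b c : ℤ} (h : IsGrowing a b c) :
    ¬ FiniteMutationType (triangle a b c) := by
  set T : ℕ → ℤ × ℤ × ℤ := fun n => growStep^[n] (a, b, c) with hT
  have key : ∀ n, IsGrowing (T n).1 (T n).2.1 (T n).2.2 ∧
      MutEquiv (triangle a b c) (triangle (T n).1 (T n).2.1 (T n).2.2) := by
    intro n
    induction n with
    | zero => exact ⟨h, .refl _⟩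
    | succ n ih =>
      obtain ⟨hgrow, hequiv⟩ := ih
      simp only [hT, Function.iterate_succ_apply']
      exact ⟨hgrow.next, hequiv.trans (mutEquiv_triangle_step _ (by linarith [hgrow.1])
        (by linarith [hgrow.2.1]))⟩
  have hmono : StrictMono fun n => (T n).1 := strictMono_nat_of_lt_succ fun n => by
    simpa only [hT, Function.iterate_succ_apply', growStep] using (key n).1.lt_mul_sub
  refine Set.infinite_of_injective_forall_mem
    (f := fun n => triangle (T n).1 (T n).2.1 (T n).2.2) (fun m n hmn => ?_) (fun n => (key n).2)
  exact hmono.injective (congrFun (congrFun hmn 0) 1)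

def finiteCycleWeights : Finset (ℤ × ℤ × ℤ) :=
  {(1, 1, 1), (2, 1, 1), (1, 2, 1), (1, 1, 2), (2, 2, 2)}

lemma mem_of_not_isGrowing {u v w : ℤ} (hu : 1 ≤ u) (hv : 1 ≤ v) (hw : 1 ≤ w)
    (h₁ : ¬ IsGrowing u v w) (h₂ : ¬ IsGrowing v w u) (h₃ : ¬ IsGrowing w u v) :
    (u, v, w) ∈ finiteCycleWeights := by
  simp only [IsGrowing, not_and, not_lt] at h₁ h₂ h₃
  have h₁ := h₁ hu; have h₂ := h₂ hv; have h₃ := h₃ hw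
  have hle : u ≤ 2 ∧ v ≤ 2 ∧ w ≤ 2 := by
    refine ⟨?_, ?_, ?_⟩ <;> by_contra! hbig
    · have := h₃ (by omega) hv
      have := h₁ (by nlinarith) hw
      nlinarith
    · have := h₁ (by omega) hw
      have := h₂ (by nlinarith) hu
      nlinarith
    · have := h₂ (by omega) hu
      have := h₃ (by nlinarith) hv
      nlinarith
  obtain ⟨hu2, hv2, hw2⟩ := hle
  interval_cases u <;> interval_cases v <;> interval_cases w <;> simp_all [finiteCycleWeights]

lemma FiniteMutationType.cycle_weights {u v w : ℤ} (hu : 1 ≤ u) (hv : 1 ≤ v) (hw : 1 ≤ w)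
    (hfin : FiniteMutationType (triangle u v w)) : (u, v, w) ∈ finiteCycleWeights := by
  have hfin₁ := hfin.of_mutEquiv (mutEquiv_triangle_rotate u v w)
  have hfin₂ := hfin₁.of_mutEquiv (mutEquiv_triangle_rotate v w u)
  exact mem_of_not_isGrowing hu hv hw (fun h => not_finiteMutationType_of_isGrowing h hfin)
    (fun h => not_finiteMutationType_of_isGrowing h hfin₁)
    (fun h => not_finiteMutationType_of_isGrowing h hfin₂)

lemma FiniteMutationType.acyclic_weights {a b c : ℤ} (ha : 1 ≤ a) (hb : 1 ≤ b) (hc : c ≤ 0)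
    (hfin : FiniteMutationType (triangle a b c)) : a = 1 ∧ b = 1 ∧ -1 ≤ c := by
  have hmem := (hfin.of_mutEquiv (mutEquiv_triangle_flip c (by omega) (by omega))).cycle_weights
    hb ha (by nlinarith)
  simp only [finiteCycleWeights, Finset.mem_insert, Finset.mem_singleton, Prod.mk.injEq] at hmem
  obtain ⟨rfl, rfl, h⟩ | ⟨rfl, rfl, h⟩ | ⟨rfl, rfl, h⟩ | ⟨rfl, rfl, h⟩ | ⟨rfl, rfl, h⟩ := hmem <;>
    omega

lemma FiniteMutationType.ordered_weights {a b c : ℤ} (ha : 0 ≤ a) (hb : 0 ≤ b) (hc : c ≤ 0)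
    (hab : a ≠ 0 ∨ b ≠ 0) (hbc : b ≠ 0 ∨ c ≠ 0) (hca : c ≠ 0 ∨ a ≠ 0)
    (hfin : FiniteMutationType (triangle a b c)) : a ≤ 1 ∧ b ≤ 1 ∧ -1 ≤ c := by
  rcases ha.eq_or_lt with rfl | ha
  · have hflip := (mutEquiv_triangle_flip c le_rfl hb).trans <|
      (mutEquiv_triangle_rotate _ _ _).trans (mutEquiv_triangle_rotate _ _ _)
    rw [zero_mul, zero_sub] at hflip
    have := (hfin.of_mutEquiv hflip).acyclic_weights (by omega) (by omega) le_rfl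
    omega
  rcases hb.eq_or_lt with rfl | hb
  · have hflip := (mutEquiv_triangle_flip c ha.le le_rfl).trans (mutEquiv_triangle_rotate _ _ _)
    rw [mul_zero, zero_sub] at hflip
    have := (hfin.of_mutEquiv hflip).acyclic_weights (by omega) (by omega) le_rfl
    omega
  have := hfin.acyclic_weights ha hb hc
  omega

lemma sign_triangle (a b c : ℤ) (i j : Fin 3) :
    (triangle a b c i j).sign = triangle a.sign b.sign c.sign i j := by
  fin_cases i <;> fin_cases j <;> simp [triangle, Int.sign_neg]

/-- The claim only depends on the signs of the entries, so it is checked on the 27 sign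
patterns. -/
lemma IsSkewQ.exists_perm_cyclic_or_ordered {B : Matrix (Fin 3) (Fin 3) ℤ} (hB : IsSkewQ B) :
    ∃ σ : Equiv.Perm (Fin 3),
      (0 < B (σ 0) (σ 1) ∧ 0 < B (σ 1) (σ 2) ∧ 0 < B (σ 2) (σ 0)) ∨
      (0 ≤ B (σ 0) (σ 1) ∧ 0 ≤ B (σ 1) (σ 2) ∧ B (σ 2) (σ 0) ≤ 0) := by
  rw [hB.eq_triangle]
  generalize B 0 1 = a, B 1 2 = b, B 2 0 = c
  have hmem (x : ℤ) : x.sign ∈ ([-1, 0, 1] : List ℤ) := by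
    rcases Int.sign_trichotomy x with h | h | h <;> simp [h]
  have key : ∀ s ∈ ([-1, 0, 1] : List ℤ), ∀ t ∈ ([-1, 0, 1] : List ℤ),
      ∀ u ∈ ([-1, 0, 1] : List ℤ), ∃ σ : Equiv.Perm (Fin 3),
        (0 < triangle s t u (σ 0) (σ 1) ∧ 0 < triangle s t u (σ 1) (σ 2) ∧
          0 < triangle s t u (σ 2) (σ 0)) ∨
        (0 ≤ triangle s t u (σ 0) (σ 1) ∧ 0 ≤ triangle s t u (σ 1) (σ 2) ∧
          triangle s t u (σ 2) (σ 0) ≤ 0) := by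
    decide
  obtain ⟨σ, hσ⟩ := key _ (hmem a) _ (hmem b) _ (hmem c)
  exact ⟨σ, by simpa only [← sign_triangle, Int.sign_pos_iff, Int.sign_nonneg_iff,
    Int.sign_nonpos_iff] using hσ⟩

lemma ConnectedQ.exists_ne_zero {n : ℕ} [Nontrivial (Fin n)] {B : Matrix (Fin n) (Fin n) ℤ}
    (hB : IsSkewQ B) (hconn : ConnectedQ B) (i : Fin n) : ∃ j, B i j ≠ 0 := by
  obtain ⟨j, -, hij⟩ := hconn.preconnected.exists_adj_of_nontrivial i
  refine ⟨j, fun h => ?_⟩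
  rw [hB i j, h, neg_zero] at hij
  exact hij.elim (· rfl) (· rfl)

lemma triangle_nonzero_pairs {a b c : ℤ} (h : ∀ i, ∃ j, triangle a b c i j ≠ 0) :
    (a ≠ 0 ∨ b ≠ 0) ∧ (b ≠ 0 ∨ c ≠ 0) ∧ (c ≠ 0 ∨ a ≠ 0) := by
  refine ⟨?_, ?_, ?_⟩
  · obtain ⟨j, hj⟩ := h 1
    fin_cases j <;> simp_all [triangle]
  · obtain ⟨j, hj⟩ := h 2
    fin_cases j <;> simp_all [triangle]
  · obtain ⟨j, hj⟩ := h 0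
    fin_cases j <;> simp_all [triangle]

lemma triangle_double_edge {a b c : ℤ} (h : ∃ i j, |triangle a b c i j| = 2) :
    |a| = 2 ∨ |b| = 2 ∨ |c| = 2 := by
  obtain ⟨i, j, h⟩ := h
  fin_cases i <;> fin_cases j <;> simp_all [triangle]

def IsCycle211Or222 (B : Matrix (Fin 3) (Fin 3) ℤ) : Prop :=
  ∃ σ : Equiv.Perm (Fin 3),
    (B (σ 0) (σ 1) = 2 ∧ B (σ 1) (σ 2) = 1 ∧ B (σ 2) (σ 0) = 1) ∨
    (B (σ 0) (σ 1) = 2 ∧ B (σ 1) (σ 2) = 2 ∧ B (σ 2) (σ 0) = 2)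

lemma IsCycle211Or222.of_submatrix {B : Matrix (Fin 3) (Fin 3) ℤ} (σ : Equiv.Perm (Fin 3))
    (h : IsCycle211Or222 (B.submatrix σ σ)) : IsCycle211Or222 B := by
  obtain ⟨τ, hτ⟩ := h
  exact ⟨τ.trans σ, hτ⟩

lemma isCycle211Or222_triangle {u v w : ℤ} (hmem : (u, v, w) ∈ finiteCycleWeights)
    (hdouble : u = 2 ∨ v = 2 ∨ w = 2) : IsCycle211Or222 (triangle u v w) := by
  simp only [finiteCycleWeights, Finset.mem_insert, Finset.mem_singleton, Prod.mk.injEq] at hmem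
  obtain ⟨rfl, rfl, rfl⟩ | ⟨rfl, rfl, rfl⟩ | ⟨rfl, rfl, rfl⟩ | ⟨rfl, rfl, rfl⟩ | ⟨rfl, rfl, rfl⟩ :=
    hmem
  · simp at hdouble
  all_goals unfold IsCycle211Or222; decide

lemma finiteMutationType_triangle_two_one_one : FiniteMutationType (triangle 2 1 1) :=
  FiniteMutationType.of_mutate_closed
    {triangle 2 1 1, triangle 1 2 1, triangle 1 1 2, triangle (-2) (-1) (-1),
      triangle (-1) (-2) (-1), triangle (-1) (-1) (-2), triangle 1 1 (-1), triangle 1 (-1) 1,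
      triangle (-1) 1 1, triangle (-1) (-1) 1, triangle (-1) 1 (-1), triangle 1 (-1) (-1)}
    (by decide) (by decide)

lemma finiteMutationType_triangle_two_two_two : FiniteMutationType (triangle 2 2 2) :=
  FiniteMutationType.of_mutate_closed {triangle 2 2 2, triangle (-2) (-2) (-2)}
    (by decide) (by decide)

lemma IsCycle211Or222.finiteMutationType {B : Matrix (Fin 3) (Fin 3) ℤ} (hB : IsSkewQ B)
    (h : IsCycle211Or222 B) : FiniteMutationType B := by
  obtain ⟨σ, ⟨h₀₁, h₁₂, h₂₀⟩ | ⟨h₀₁, h₁₂, h₂₀⟩⟩ := h <;>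
  · have hσ := hB.submatrix_eq_triangle σ
    rw [h₀₁, h₁₂, h₂₀] at hσ
    refine FiniteMutationType.of_mutEquiv (hσ ▸ MutEquiv.of_submatrix B σ) ?_
    first
      | exact finiteMutationType_triangle_two_one_one
      | exact finiteMutationType_triangle_two_two_two

lemma isCycle211Or222_of_finiteMutationType {B : Matrix (Fin 3) (Fin 3) ℤ} (hB : IsSkewQ B)
    (hconn : ConnectedQ B) (hdouble : ∃ i j, |B i j| = 2) (hfin : FiniteMutationType B) :
    IsCycle211Or222 B := by
  obtain ⟨σ, hsigns⟩ := hB.exists_perm_cyclic_or_ordered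
  have hσ := hB.submatrix_eq_triangle σ
  set x := B (σ 0) (σ 1)
  set y := B (σ 1) (σ 2)
  set z := B (σ 2) (σ 0)
  have hfin' : FiniteMutationType (triangle x y z) := hσ ▸ hfin.of_mutEquiv (.submatrix B σ)
  have hdouble' : |x| = 2 ∨ |y| = 2 ∨ |z| = 2 := by
    obtain ⟨i, j, hij⟩ := hdouble
    exact triangle_double_edge ⟨σ.symm i, σ.symm j, by simpa [← hσ] using hij⟩
  rcases hsigns with ⟨hx, hy, hz⟩ | ⟨hx, hy, hz⟩
  · rw [abs_of_pos hx, abs_of_pos hy, abs_of_pos hz] at hdouble'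
    exact .of_submatrix σ (hσ ▸ isCycle211Or222_triangle (hfin'.cycle_weights hx hy hz) hdouble')
  · obtain ⟨hxy, hyz, hzx⟩ := triangle_nonzero_pairs (a := x) (b := y) (c := z) fun i => by
      obtain ⟨j, hj⟩ := hconn.exists_ne_zero hB (σ i)
      exact ⟨σ.symm j, by simpa [← hσ] using hj⟩
    have := hfin'.ordered_weights hx hy hz hxy hyz hzx
    rw [abs_of_nonneg hx, abs_of_nonneg hy, abs_of_nonpos hz] at hdouble'
    omega

/-- a connected quiver on three vertices with a double edge is of
finite mutation type iff, up to relabeling, it is an oriented triangle with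
weights (2,1,1) or (2,2,2). -/
theorem stmt1 (B : Matrix (Fin 3) (Fin 3) ℤ) (hB : IsSkewQ B) (hconn : ConnectedQ B)
    (hdouble : ∃ i j, |B i j| = 2) :
    FiniteMutationType B ↔
      ∃ σ : Equiv.Perm (Fin 3),
        (B (σ 0) (σ 1) = 2 ∧ B (σ 1) (σ 2) = 1 ∧ B (σ 2) (σ 0) = 1) ∨
        (B (σ 0) (σ 1) = 2 ∧ B (σ 1) (σ 2) = 2 ∧ B (σ 2) (σ 0) = 2) :=
  ⟨isCycle211Or222_of_finiteMutationType hB hconn hdouble, IsCycle211Or222.finiteMutationType hB⟩
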